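/- Let K and (Kₖ) be nonempty compact subsets of ℂ. Suppose that for every polynomial P in λ and λ̄, sup_{λ ∈ Kₖ} |P(λ, λ̄)| → sup_{λ ∈ K} |P(λ, λ̄)| as k → ∞. Then sup_{λ ∈ Kₖ} dist(λ, K) → 0. -/

import Mathlib

/-!
Only the upper half of the hypothesis matters: if a *-polynomial is `< c` on `K`, it is eventually
`< c` on every `Kₖ`. Applied to `P = λ` this confines the `Kₖ` to a fixed disk `D`, and by
Stone–Weierstrass every continuous function on `D` is a uniform limit of *-polynomials, so the
same upper semicontinuity holds for all continuous functions, in particular for `dist(·, K)`,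
which vanishes on `K`.
-/

open Filter Topology Metric

noncomputable def starEval (z : ℂ) : FreeAlgebra ℂ Bool →ₐ[ℂ] ℂ :=
  FreeAlgebra.lift ℂ fun b : Bool => if b then z else (starRingEnd ℂ) z

@[simp]
lemma starEval_ι (z : ℂ) (b : Bool) :
    starEval z (FreeAlgebra.ι ℂ b) = if b then z else (starRingEnd ℂ) z :=
  FreeAlgebra.lift_ι_apply _ _

lemma continuous_starEval (P : FreeAlgebra ℂ Bool) : Continuous fun z : ℂ => starEval z P := by
  induction P using FreeAlgebra.induction with
  | grade0 r => simpa only [AlgHom.commutes] using continuous_const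
  | grade1 b => cases b <;> simpa using by fun_prop
  | mul P Q hP hQ => simp only [map_mul]; exact hP.mul hQ
  | add P Q hP hQ => simp only [map_add]; exact hP.add hQ

lemma exists_starEval_eq_of_mem_starClosure {s : Set ℂ} {g : C(s, ℂ)}
    (hg : g ∈ (polynomialFunctions s).starClosure) :
    ∃ P : FreeAlgebra ℂ Bool, ∀ z : s, g z = starEval z P := by
  rw [polynomialFunctions.starClosure_eq_adjoin_X] at hg
  induction hg using Algebra.adjoin_induction with
  | mem g hg =>
    rw [Set.star_singleton] at hg
    rcases hg with rfl | rfl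
    · exact ⟨FreeAlgebra.ι ℂ true, fun z => by simp⟩
    · exact ⟨FreeAlgebra.ι ℂ false, fun z => by simp⟩
  | algebraMap r => exact ⟨algebraMap ℂ _ r, fun z => by simp⟩
  | add f g _ _ hf hg =>
    obtain ⟨P, hP⟩ := hf
    obtain ⟨Q, hQ⟩ := hg
    exact ⟨P + Q, fun z => by simp [hP, hQ]⟩
  | mul f g _ _ hf hg =>
    obtain ⟨P, hP⟩ := hf
    obtain ⟨Q, hQ⟩ := hg
    exact ⟨P * Q, fun z => by simp [hP, hQ]⟩

theorem exists_starEval_near {D : Set ℂ} (hD : IsCompact D) {f : ℂ → ℂ} (hf : ContinuousOn f D)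
    {δ : ℝ} (hδ : 0 < δ) : ∃ P : FreeAlgebra ℂ Bool, ∀ z ∈ D, ‖f z - starEval z P‖ < δ := by
  have : CompactSpace D := isCompact_iff_compactSpace.mp hD
  let F : C(D, ℂ) := ⟨D.domRestrict f, hf.domRestrict⟩
  have hF : F ∈ closure ((polynomialFunctions D).starClosure : Set C(D, ℂ)) := by
    rw [← StarSubalgebra.topologicalClosure_coe,
      polynomialFunctions.starClosure_topologicalClosure]
    trivial
  obtain ⟨g, hg, hFg⟩ := Metric.mem_closure_iff.mp hF δ hδ
  obtain ⟨P, hP⟩ := exists_starEval_eq_of_mem_starClosure hg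
  refine ⟨P, fun z hz => ?_⟩
  rw [← dist_eq_norm, ← hP ⟨z, hz⟩]
  exact (ContinuousMap.dist_apply_le_dist (⟨z, hz⟩ : D)).trans_lt hFg

theorem eventually_forall_lt_of_tendsto_sSup_image {X : Type*} [TopologicalSpace X]
    {K : Set X} {Kk : ℕ → Set X} (hK : IsCompact K) (hKne : K.Nonempty)
    (hKk : ∀ k, IsCompact (Kk k)) {f : X → ℝ} (hf : Continuous f)
    (hlim : Tendsto (fun k => sSup (f '' Kk k)) atTop (𝓝 (sSup (f '' K))))
    {c : ℝ} (hc : ∀ z ∈ K, f z < c) : ∀ᶠ k in atTop, ∀ z ∈ Kk k, f z < c := by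
  rw [← hK.sSup_lt_iff_of_continuous hKne hf.continuousOn] at hc
  filter_upwards [hlim.eventually_lt_const hc] with k hk z hz
  exact (le_csSup ((hKk k).bddAbove_image hf.continuousOn) (Set.mem_image_of_mem f hz)).trans_lt hk

theorem eventually_forall_norm_lt_of_continuous {K : Set ℂ} {Kk : ℕ → Set ℂ} (hK : IsCompact K)
    (H : ∀ (P : FreeAlgebra ℂ Bool) (c : ℝ), (∀ z ∈ K, ‖starEval z P‖ < c) →
      ∀ᶠ k in atTop, ∀ z ∈ Kk k, ‖starEval z P‖ < c)
    {f : ℂ → ℂ} (hf : Continuous f) {c : ℝ} (hc : ∀ z ∈ K, ‖f z‖ < c) :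
    ∀ᶠ k in atTop, ∀ z ∈ Kk k, ‖f z‖ < c := by
  obtain ⟨R, hKR⟩ := hK.isBounded.subset_ball 0
  have hball : ∀ᶠ k in atTop, Kk k ⊆ closedBall 0 R := by
    filter_upwards [H (FreeAlgebra.ι ℂ true) R fun z hz => by simpa using hKR hz] with k hk z hz
    simpa using (hk z hz).le
  obtain ⟨η, hη, hfη⟩ := hK.exists_forall_le' (f := fun z => c - ‖f z‖) (by fun_prop)
    (a := 0) fun z hz => sub_pos.mpr (hc z hz)
  obtain ⟨P, hP⟩ := exists_starEval_near (isCompact_closedBall 0 R) hf.continuousOn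
    (δ := η / 2) (by positivity)
  have hPK : ∀ z ∈ K, ‖starEval z P‖ < c - η / 2 := by
    intro z hz
    have := norm_le_norm_add_norm_sub (f z) (starEval z P)
    linarith [hP z (ball_subset_closedBall (hKR hz)), hfη z hz]
  filter_upwards [hball, H P _ hPK] with k hk hPk z hz
  have := norm_le_norm_add_norm_sub' (f z) (starEval z P)
  linarith [hP z (hk hz), hPk z hz]

theorem stmt_17_general (K : Set ℂ) (Kk : ℕ → Set ℂ)
    (hK : IsCompact K) (hKne : K.Nonempty)
    (hKk : ∀ k, IsCompact (Kk k))
    (h : ∀ P : FreeAlgebra ℂ Bool,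
      Tendsto
        (fun k => sSup ((fun z : ℂ =>
          ‖FreeAlgebra.lift ℂ
            (fun b : Bool => if b then z else (starRingEnd ℂ) z) P‖) '' Kk k))
        atTop
        (𝓝 (sSup ((fun z : ℂ =>
          ‖FreeAlgebra.lift ℂ
            (fun b : Bool => if b then z else (starRingEnd ℂ) z) P‖) '' K)))) :
    Tendsto (fun k => sSup ((fun z : ℂ => Metric.infDist z K) '' Kk k)) atTop (𝓝 0) := by
  have hinfDist (ε : ℝ) (hε : 0 < ε) : ∀ᶠ k in atTop, ∀ z ∈ Kk k, infDist z K < ε := by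
    simpa [abs_of_nonneg infDist_nonneg] using eventually_forall_norm_lt_of_continuous hK
      (fun P _ => eventually_forall_lt_of_tendsto_sSup_image hK hKne hKk
        (continuous_starEval P).norm (h P))
      (f := fun z => (infDist z K : ℂ)) (by fun_prop) (c := ε)
      fun z hz => by simpa [infDist_zero_of_mem hz]
  refine tendsto_order.2 ⟨fun a ha => ?_, fun ε hε => ?_⟩
  · exact .of_forall fun k => ha.trans_le <| Real.sSup_nonneg <| by
      rintro _ ⟨z, -, rfl⟩; exact infDist_nonneg
  · filter_upwards [hinfDist (ε / 2) (half_pos hε)] with k hk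
    refine (Real.sSup_le ?_ (half_pos hε).le).trans_lt (half_lt_self hε)
    rintro _ ⟨z, hz, rfl⟩
    exact (hk z hz).le

/-- if `K` and the `Kₖ` are nonempty compact subsets of `ℂ` and the
sup-norms over `Kₖ` of every *-polynomial `P(λ, λ̄)` (an element of the free algebra on
two generators, evaluated at `λ` and `conj λ`) converge to the sup-norm over `K`, then
`sup_{λ ∈ Kₖ} dist(λ, K) → 0`. -/
theorem stmt_17 (K : Set ℂ) (Kk : ℕ → Set ℂ)
    (hK : IsCompact K) (hKne : K.Nonempty)
    (hKk : ∀ k, IsCompact (Kk k)) (hKkne : ∀ k, (Kk k).Nonempty)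
    (h : ∀ P : FreeAlgebra ℂ Bool,
      Tendsto
        (fun k => sSup ((fun z : ℂ =>
          ‖FreeAlgebra.lift ℂ
            (fun b : Bool => if b then z else (starRingEnd ℂ) z) P‖) '' Kk k))
        atTop
        (𝓝 (sSup ((fun z : ℂ =>
          ‖FreeAlgebra.lift ℂ
            (fun b : Bool => if b then z else (starRingEnd ℂ) z) P‖) '' K)))) :
    Tendsto (fun k => sSup ((fun z : ℂ => Metric.infDist z K) '' Kk k)) atTop (𝓝 0) :=
  stmt_17_general K Kk hK hKne hKk h
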